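/- arXiv:2501.17524 — 2 statements merged into one kernel-verified Lean document; each statement's English description precedes it below -/
import Mathlib

section
/- Let $n \geq 5$ be odd and $\delta : A_n \to I_2$ a derivation, where $I_2 = \{x \in \mathbb{F}_2^n : \sum_i x_i = 0\}$ with the natural $A_n$-action. If $x = ((1\,2)(3\,4))^\delta$, then $x_5 = x_6 = \cdots = x_n = 0$ and $x_1 + x_2 = x_3 + x_4 = 0$; in particular there are at most $4$ possible values of $x$. -/
/-!
Write `g = (a b)(c d)`. Since `g² = 1`, the cocycle identity gives `δ(g)^g = -δ(g)`, which pairs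
`x_a` with `x_b` and `x_c` with `x_d`. Any element `h` commuting with `g` satisfies
`δ(g)^h + δ(h) = δ(h)^g + δ(g)`; evaluated at a point fixed by `g` this shows that `x` is
invariant under `h` there. Taking `h = (i j)(a b)` makes `x` constant, say `c`, on the points
fixed by `g`, so the coordinate sum of `x` is `(n - 4) c`, which vanishes only for `c = 0` when
`n` is odd.
-/

/-- `δ : Aₙ → 𝔽₂ⁿ` is a derivation into the augmentation module `I₂`:
its values have coordinate-sum zero and it satisfies the cocycle identity
`δ(gh) = δ(g)^h + δ(h)` for the coordinate-permutation action. -/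
def IsDer (n : ℕ) (δ : ↥(alternatingGroup (Fin n)) → Fin n → ZMod 2) : Prop :=
  (∀ g, ∑ i, δ g i = 0) ∧
  (∀ g h : ↥(alternatingGroup (Fin n)),
    δ (g * h) = (fun i => δ g ((h : Equiv.Perm (Fin n))⁻¹ i)) + δ h)

open Equiv

def IsPermCocycle {α M : Type*} [AddCommGroup M] {H : Subgroup (Perm α)} (δ : H → α → M) :
    Prop :=
  ∀ g h : H, δ (g * h) = (fun i => δ g ((h : Perm α)⁻¹ i)) + δ h

namespace IsPermCocycle

variable {α M : Type*} [AddCommGroup M] {H : Subgroup (Perm α)} {δ : H → α → M}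

theorem map_one (hδ : IsPermCocycle δ) : δ 1 = 0 := by
  have h := hδ 1 1
  rw [mul_one] at h
  funext i
  simpa using congrFun h i

theorem apply_inv_of_mul_self (hδ : IsPermCocycle δ) {g : H} (hg : g * g = 1) (i : α) :
    δ g ((g : Perm α)⁻¹ i) = -δ g i := by
  have h := congrFun (hδ g g) i
  rw [hg, hδ.map_one] at h
  exact eq_neg_of_add_eq_zero_left h.symm

theorem apply_inv_of_commute (hδ : IsPermCocycle δ) {g h : H} (hgh : Commute g h) {j : α}
    (hj : (g : Perm α) j = j) : δ g ((h : Perm α)⁻¹ j) = δ g j := by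
  have hj' : (g : Perm α)⁻¹ j = j := by rw [Perm.inv_eq_iff_eq, hj]
  have key := congrFun (hδ g h) j
  rw [hgh.eq, hδ h g] at key
  simp only [Pi.add_apply, hj'] at key
  rw [add_comm] at key
  exact (add_right_cancel key).symm

variable [DecidableEq α] {a b c d : α}

theorem add_apply_eq_zero_of_swap_mul_swap (hδ : IsPermCocycle δ) {g : H}
    (hg : (g : Perm α) = swap a b * swap c d) (habcd : [a, b, c, d].Nodup) :
    δ g a + δ g b = 0 ∧ δ g c + δ g d = 0 := by
  have hcomm : Commute (swap a b) (swap c d) := (Perm.disjoint_swap_swap habcd).commute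
  have hgg : g * g = 1 := Subtype.ext <| by
    show (g : Perm α) * g = 1
    rw [hg, ← sq, hcomm.mul_pow, sq, sq, swap_mul_self, swap_mul_self, mul_one]
  have hginv : (g : Perm α)⁻¹ = g := by
    rw [← Subgroup.coe_inv, inv_eq_of_mul_eq_one_right hgg]
  obtain ⟨⟨-, hac, had⟩, ⟨hbc, hbd⟩, -⟩ := by simpa using habcd
  have hga : (g : Perm α)⁻¹ a = b := by
    rw [hginv, hg, Perm.mul_apply, swap_apply_of_ne_of_ne hac had, swap_apply_left]
  have hgc : (g : Perm α)⁻¹ c = d := by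
    rw [hginv, hg, Perm.mul_apply, swap_apply_left,
      swap_apply_of_ne_of_ne (Ne.symm had) (Ne.symm hbd)]
  constructor
  · rw [← hga, hδ.apply_inv_of_mul_self hgg, add_neg_cancel]
  · rw [← hgc, hδ.apply_inv_of_mul_self hgg, add_neg_cancel]

theorem apply_eq_of_swap_mul_swap (hδ : IsPermCocycle δ) {g : H}
    (hg : (g : Perm α) = swap a b * swap c d) (habcd : [a, b, c, d].Nodup) {i j : α}
    (hij : i ≠ j) (hi : i ∉ [a, b, c, d]) (hj : j ∉ [a, b, c, d])
    (hmem : swap i j * swap a b ∈ H) : δ g i = δ g j := by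
  obtain ⟨hia, hib, hic, hid⟩ : i ≠ a ∧ i ≠ b ∧ i ≠ c ∧ i ≠ d := by simpa using hi
  obtain ⟨hja, hjb, hjc, hjd⟩ : j ≠ a ∧ j ≠ b ∧ j ≠ c ∧ j ≠ d := by simpa using hj
  obtain ⟨⟨hab, -, -⟩, -, hcd⟩ := by simpa using habcd
  let h : H := ⟨swap i j * swap a b, hmem⟩
  have hij_ab : (swap i j).Disjoint (swap a b) := Perm.disjoint_swap_swap (by simp [*])
  have hij_cd : (swap i j).Disjoint (swap c d) := Perm.disjoint_swap_swap (by simp [*])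
  have hab_cd : (swap a b).Disjoint (swap c d) := Perm.disjoint_swap_swap habcd
  have hgh : Commute (g : Perm α) h := by
    rw [hg]
    exact .mul_right (hij_ab.mul_right hij_cd).symm.commute
      (.mul_left (.refl _) hab_cd.commute.symm)
  have hgj : (g : Perm α) j = j := by
    rw [hg, Perm.mul_apply, swap_apply_of_ne_of_ne hjc hjd, swap_apply_of_ne_of_ne hja hjb]
  have hhj : (h : Perm α)⁻¹ j = i := by
    show (swap i j * swap a b)⁻¹ j = i
    rw [mul_inv_rev, swap_inv, swap_inv, Perm.mul_apply, swap_apply_right,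
      swap_apply_of_ne_of_ne hia hib]
  rw [← hδ.apply_inv_of_commute (Subtype.ext hgh.eq) hgj, hhj]

end IsPermCocycle

theorem Fin.sum_eq_sum_castLE_add_nsmul {M : Type*} [AddCommMonoid M] {n k : ℕ} (hk : k ≤ n)
    (x : Fin n → M) {c : M} (hx : ∀ i : Fin n, k ≤ (i : ℕ) → x i = c) :
    ∑ i, x i = ∑ i : Fin k, x (Fin.castLE hk i) + (n - k) • c := by
  obtain ⟨m, rfl⟩ := Nat.exists_eq_add_of_le hk
  rw [Fin.sum_univ_add, Finset.sum_congr rfl fun i _ => hx _ (Fin.le_coe_natAdd k i),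
    Finset.sum_const, Finset.card_univ, Fintype.card_fin, Nat.add_sub_cancel_left]
  rfl

theorem ncard_setOf_vanish_ge_four_add_eq_zero_le {R : Type*} [AddGroup R] [Finite R] {n : ℕ}
    (hn : 4 ≤ n) :
    ({x : Fin n → R | (∀ i : Fin n, 4 ≤ (i : ℕ) → x i = 0) ∧
        x ⟨0, by omega⟩ + x ⟨1, by omega⟩ = 0 ∧
        x ⟨2, by omega⟩ + x ⟨3, by omega⟩ = 0}).ncard ≤ Nat.card R * Nat.card R := by
  rw [← Nat.card_prod, ← Set.ncard_univ]
  refine Set.ncard_le_ncard_of_injOn (fun x => (x ⟨0, by omega⟩, x ⟨2, by omega⟩))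
    (fun _ _ => trivial) ?_
  rintro x ⟨hx, hx01, hx23⟩ y ⟨hy, hy01, hy23⟩ hxy
  obtain ⟨h0, h2⟩ := Prod.ext_iff.1 hxy
  dsimp only at h0 h2
  funext ⟨i, hi⟩
  by_cases hi4 : 4 ≤ i
  · rw [hx _ hi4, hy _ hi4]
  interval_cases i
  · exact h0
  · rw [← neg_eq_of_add_eq_zero_right hx01, ← neg_eq_of_add_eq_zero_right hy01, h0]
  · exact h2
  · rw [← neg_eq_of_add_eq_zero_right hx23, ← neg_eq_of_add_eq_zero_right hy23, h2]

/-- For odd `n ≥ 5` and a derivation `δ : Aₙ → I₂`, the value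
`x = δ((1 2)(3 4))` satisfies `x₅ = ⋯ = xₙ = 0` and `x₁ + x₂ = x₃ + x₄ = 0`;
in particular there are at most `4` possible values of `x`. -/
theorem stmt_15 (n : ℕ) (hn : 5 ≤ n) (hodd : Odd n)
    (δ : ↥(alternatingGroup (Fin n)) → Fin n → ZMod 2) (hδ : IsDer n δ)
    (g : ↥(alternatingGroup (Fin n)))
    (hg : (g : Equiv.Perm (Fin n)) =
      Equiv.swap ⟨0, by omega⟩ ⟨1, by omega⟩ * Equiv.swap ⟨2, by omega⟩ ⟨3, by omega⟩) :
    (∀ i : Fin n, 4 ≤ (i : ℕ) → δ g i = 0) ∧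
    δ g ⟨0, by omega⟩ + δ g ⟨1, by omega⟩ = 0 ∧
    δ g ⟨2, by omega⟩ + δ g ⟨3, by omega⟩ = 0 ∧
    ({x : Fin n → ZMod 2 | (∀ i : Fin n, 4 ≤ (i : ℕ) → x i = 0) ∧
        x ⟨0, by omega⟩ + x ⟨1, by omega⟩ = 0 ∧
        x ⟨2, by omega⟩ + x ⟨3, by omega⟩ = 0}).ncard ≤ 4 := by
  have hcocycle : IsPermCocycle δ := hδ.2
  have hnodup : [(⟨0, by omega⟩ : Fin n), ⟨1, by omega⟩, ⟨2, by omega⟩, ⟨3, by omega⟩].Nodup := by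
    simp [Fin.ext_iff]
  obtain ⟨h01, h23⟩ := hcocycle.add_apply_eq_zero_of_swap_mul_swap hg hnodup
  have hfixed : ∀ i : Fin n, 4 ≤ (i : ℕ) →
      i ∉ [(⟨0, by omega⟩ : Fin n), ⟨1, by omega⟩, ⟨2, by omega⟩, ⟨3, by omega⟩] := by
    grind [Fin.ext_iff]
  have hconst : ∀ i j : Fin n, 4 ≤ (i : ℕ) → 4 ≤ (j : ℕ) → δ g j = δ g i := by
    intro i j hi hj
    rcases eq_or_ne j i with rfl | hji
    · rfl
    refine hcocycle.apply_eq_of_swap_mul_swap hg hnodup hji (hfixed j hj) (hfixed i hi) ?_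
    simp [Perm.mem_alternatingGroup, Perm.sign_swap hji, Fin.ext_iff]
  have hlarge : ∀ i : Fin n, 4 ≤ (i : ℕ) → δ g i = 0 := by
    intro i hi
    have h := hδ.1 g
    rw [Fin.sum_eq_sum_castLE_add_nsmul (by omega) _ (hconst i · hi), Fin.sum_univ_four]
      at h
    change δ g ⟨0, _⟩ + δ g ⟨1, _⟩ + δ g ⟨2, _⟩ + δ g ⟨3, _⟩ + _ = 0 at h
    have hodd' : Odd (n - 4) := by
      obtain ⟨m, rfl⟩ := hodd
      exact ⟨m - 2, by omega⟩
    rw [nsmul_eq_mul, ZMod.natCast_eq_one_iff_odd.2 hodd', one_mul] at h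
    linear_combination h - h01 - h23
  refine ⟨hlarge, h01, h23, ?_⟩
  simpa using ncard_setOf_vanish_ge_four_add_eq_zero_le (R := ZMod 2) (by omega : 4 ≤ n)
end

section
/- Let $A$ be a finite abelian group and $n \geq 5$. Then $d(A \times A_n) = \max(d(A), 2)$, where $d$ denotes the minimal number of generators. -/
/-! `A × Aₙ` maps onto `A` and onto the non-cyclic group `Aₙ`, which gives the lower bound.
For the upper bound, let `H ≤ A × S` project onto both factors, with `A` abelian and `S` perfect:
`⁅H, H⁆` lies in `1 × S` and projects onto `⁅S, S⁆ = S`, so `H ⊇ 1 × S` and `H = A × S`. Hence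
pairing a generating `k`-tuple of `A` with one of `S` generates `A × S`. Finally `Aₙ` is
`2`-generated: for an `n`-cycle `σ`, `t = (x σx)` and `c = (x σx σ²x)`, take `ρ = σ` or `ρ = σt`,
whichever is even. Conjugation by `t` sends `c ↦ c⁻¹` and `ρ ↦ cρ`, so `⟨c, ρ⟩` is normalized by
`t` and `σ`, which generate `Sₙ`, and a nontrivial normal subgroup of `Sₙ` contains `Aₙ`. -/

/-- The minimal number of generators of a group. -/
noncomputable def ngen (G : Type*) [Group G] : ℕ :=
  sInf {k | ∃ S : Finset G, S.card = k ∧ Subgroup.closure (S : Set G) = ⊤}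

open Equiv Equiv.Perm Finset Subgroup

theorem ngen_eq_rank (G : Type*) [Group G] [Group.FG G] : ngen G = Group.rank G := by
  obtain ⟨S, hS, hSgen⟩ := Group.rank_spec G
  have hS' : S.card ∈ {k | ∃ S : Finset G, S.card = k ∧ closure (S : Set G) = ⊤} :=
    ⟨S, rfl, hSgen⟩
  refine le_antisymm (hS ▸ Nat.sInf_le hS') ?_
  obtain ⟨T, hT, hTgen⟩ := Nat.sInf_mem ⟨_, hS'⟩
  exact (Group.rank_le hTgen).trans_eq hT

theorem Subgroup.eq_top_of_map_fst_eq_top_of_map_snd_eq_top {A S : Type*} [CommGroup A] [Group S]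
    (hS : _root_.commutator S = ⊤) {H : Subgroup (A × S)} (hfst : H.map (MonoidHom.fst A S) = ⊤)
    (hsnd : H.map (MonoidHom.snd A S) = ⊤) : H = ⊤ := by
  have hcomm_fst : ⁅H, H⁆ ≤ (MonoidHom.fst A S).ker := by
    rw [← map_eq_bot_iff, map_commutator, hfst, ← _root_.commutator_def, commutator_eq_bot]
  have hcomm_snd : ⁅H, H⁆.map (MonoidHom.snd A S) = ⊤ := by
    rw [map_commutator, hsnd, ← _root_.commutator_def, hS]
  have hker : (MonoidHom.fst A S).ker ≤ H := by
    intro x hx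
    obtain ⟨h, hh, hx2⟩ := hcomm_snd ▸ mem_top x.2
    have : h = x := Prod.ext ((hcomm_fst hh).trans hx.symm) hx2
    exact this ▸ H.commutator_le_self hh
  rw [← comap_map_eq_self hker, hfst, comap_top]

namespace Group

variable {G : Type*} [Group G] [FG G]

theorem rank_le_card_of_closure_range_eq_top {ι : Type*} [Fintype ι] {f : ι → G}
    (hf : closure (Set.range f) = ⊤) : rank G ≤ Fintype.card ι := by
  classical
  calc rank G ≤ (univ.image f).card := rank_le (by rwa [coe_image, coe_univ, Set.image_univ])
    _ ≤ Fintype.card ι := card_image_le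

theorem exists_fin_closure_range_eq_top {k : ℕ} (hk : rank G ≤ k) :
    ∃ f : Fin k → G, closure (Set.range f) = ⊤ := by
  obtain ⟨S, hS, hSgen⟩ := rank_spec G
  refine ⟨fun i ↦ S.toList.getD i 1, eq_top_iff.2 (hSgen ▸ closure_mono ?_)⟩
  intro x hx
  obtain ⟨i, hi, rfl⟩ := List.getElem_of_mem (mem_toList.2 hx)
  exact ⟨⟨i, by simp at hi; omega⟩, List.getD_eq_getElem _ _ hi⟩

theorem isCyclic_of_rank_le_one (h : rank G ≤ 1) : IsCyclic G := by
  obtain ⟨S, hS, hSgen⟩ := rank_spec G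
  obtain ⟨g, hg⟩ := card_le_one_iff_subset_singleton.1 (hS ▸ h)
  refine isCyclic_iff_exists_zpowers_eq_top.2 ⟨g, eq_top_iff.2 ?_⟩
  rw [← hSgen, zpowers_eq_closure]
  exact closure_mono (by exact_mod_cast hg)

theorem two_le_rank_of_not_isCyclic (h : ¬IsCyclic G) : 2 ≤ rank G := by
  by_contra! hlt
  exact h (isCyclic_of_rank_le_one (by omega))

theorem rank_prod_le_max {A S : Type*} [CommGroup A] [Group S] [FG A] [FG S]
    (hS : _root_.commutator S = ⊤) : rank (A × S) ≤ max (rank A) (rank S) := by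
  obtain ⟨a, ha⟩ := exists_fin_closure_range_eq_top (le_max_left (rank A) (rank S))
  obtain ⟨s, hs⟩ := exists_fin_closure_range_eq_top (le_max_right (rank A) (rank S))
  have hgen : closure (Set.range fun i ↦ (a i, s i)) = ⊤ := by
    apply eq_top_of_map_fst_eq_top_of_map_snd_eq_top hS
    · rwa [MonoidHom.map_closure, ← Set.range_comp]
    · rwa [MonoidHom.map_closure, ← Set.range_comp]
  simpa using rank_le_card_of_closure_range_eq_top hgen

end Group

theorem Subgroup.mem_normalizer_closure_of_conj_mem {G : Type*} [Group G] [Finite G] {s : Set G}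
    {g : G} (h : ∀ x ∈ s, g * x * g⁻¹ ∈ closure s) : g ∈ normalizer (closure s : Set G) := by
  have hmap : (closure s).map (MulAut.conj g) ≤ closure s := by
    rw [MonoidHom.map_closure, closure_le]
    rintro _ ⟨x, hx, rfl⟩
    exact h x hx
  exact mem_normalizer_fintype fun x hx ↦ hmap ⟨x, hx, rfl⟩

namespace Equiv.Perm

variable {α : Type*} [DecidableEq α]

theorem swap_mul_mul_swap_eq (σ : Perm α) (x : α) :
    swap x (σ x) * σ * swap x (σ x) = swap x (σ x) * swap (σ x) (σ (σ x)) * σ := by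
  rw [swap_apply_apply]
  group

variable [Fintype α]

theorem closure_swap_mul_swap_pair_normal {σ ρ : Perm α} (hσ : σ.IsCycle)
    (hσs : σ.support = univ) (x : α) (hρ : ρ = σ ∨ ρ = σ * swap x (σ x)) :
    (closure {swap x (σ x) * swap (σ x) (σ (σ x)), ρ}).Normal := by
  set t := swap x (σ x)
  set c := t * swap (σ x) (σ (σ x))
  set H := closure {c, ρ}
  have hcH : c ∈ H := subset_closure (Set.mem_insert _ _)
  have hρH : ρ ∈ H := subset_closure (Set.mem_insert_of_mem _ rfl)
  have htt : t * t = 1 := swap_mul_self _ _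
  have htc : t * c * t⁻¹ = c⁻¹ := by simp [c, t]
  have htσ : t * σ * t = c * σ := swap_mul_mul_swap_eq σ x
  have htρ : t * ρ * t⁻¹ = c * ρ := by
    rw [show t⁻¹ = t from swap_inv _ _]
    rcases hρ with rfl | rfl
    · exact htσ
    · rw [← mul_assoc c, ← htσ]
      simp only [mul_assoc, htt, mul_one]
  have ht : t ∈ normalizer (H : Set (Perm α)) := by
    refine mem_normalizer_closure_of_conj_mem ?_
    rintro g (rfl | rfl)
    · exact htc ▸ inv_mem hcH
    · exact htρ ▸ mul_mem hcH hρH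
  have hσN : σ ∈ normalizer (H : Set (Perm α)) := by
    rcases hρ with rfl | rfl
    · exact le_normalizer hρH
    · simpa [mul_assoc, htt] using mul_mem (le_normalizer hρH) ht
  rw [← normalizer_eq_top_iff, eq_top_iff, ← closure_cycle_adjacent_swap hσ hσs x, closure_le]
  exact Set.insert_subset hσN (Set.singleton_subset_iff.2 ht)

theorem closure_swap_mul_swap_pair_eq_alternatingGroup (h5 : 5 ≤ Nat.card α) {σ ρ : Perm α}
    (hσ : σ.IsCycle) (hσs : σ.support = univ) (x : α) (hρ : ρ = σ ∨ ρ = σ * swap x (σ x))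
    (hρA : ρ ∈ alternatingGroup α) :
    closure {swap x (σ x) * swap (σ x) (σ (σ x)), ρ} = alternatingGroup α := by
  have hx1 : σ x ≠ x := mem_support.1 (hσs ▸ mem_univ x)
  have hx2 : σ (σ x) ≠ x := by
    intro h
    have hσ2 : σ ^ 2 = 1 := hσ.pow_eq_one_iff.2 ⟨x, hx1, by simpa [sq] using h⟩
    have := Nat.le_of_dvd two_pos (orderOf_dvd_of_pow_eq_one hσ2)
    rw [hσ.orderOf, hσs, card_univ, ← Nat.card_eq_fintype_card] at this
    omega
  have hc : IsThreeCycle (swap x (σ x) * swap (σ x) (σ (σ x))) := by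
    rw [swap_comm x]
    exact isThreeCycle_swap_mul_swap_same hx1 (σ.injective.ne hx1).symm hx2.symm
  have := closure_swap_mul_swap_pair_normal hσ hσs x hρ
  refine le_antisymm ?_ (alternatingGroup_le_of_normal h5 ?_)
  · rw [closure_le]
    exact Set.insert_subset hc.mem_alternatingGroup (Set.singleton_subset_iff.2 hρA)
  · exact (nontrivial_iff_exists_ne_one _).2 ⟨_, subset_closure (Set.mem_insert _ _), hc.ne_one⟩

theorem exists_closure_pair_eq_alternatingGroup {n : ℕ} (hn : 5 ≤ n) :
    ∃ a b : Perm (Fin n), closure {a, b} = alternatingGroup (Fin n) := by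
  have h5 : 5 ≤ Nat.card (Fin n) := by simpa using hn
  have hσ := isCycle_finRotate_of_le (by omega : 2 ≤ n)
  have hσs := support_finRotate_of_le (by omega : 2 ≤ n)
  let x : Fin n := ⟨0, by omega⟩
  have hx : finRotate n x ≠ x := mem_support.1 (hσs ▸ mem_univ x)
  rcases Int.units_eq_one_or (sign (finRotate n)) with h | h
  · exact ⟨_, _, closure_swap_mul_swap_pair_eq_alternatingGroup h5 hσ hσs x (Or.inl rfl) h⟩
  · refine ⟨_, _, closure_swap_mul_swap_pair_eq_alternatingGroup h5 hσ hσs x (Or.inr rfl) ?_⟩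
    rw [mem_alternatingGroup, map_mul, h, sign_swap hx.symm, neg_mul_neg, one_mul]

end Equiv.Perm

theorem alternatingGroup.rank_eq_two {α : Type*} [Fintype α] [DecidableEq α]
    (h5 : 5 ≤ Nat.card α) : Group.rank (alternatingGroup α) = 2 := by
  refine le_antisymm ?_
    (Group.two_le_rank_of_not_isCyclic (by rw [isCyclic_iff_card_le_three]; omega))
  rw [Group.rank_congr (altCongrHom (Fintype.equivFin α))]
  obtain ⟨a, b, hab⟩ := exists_closure_pair_eq_alternatingGroup (n := Fintype.card α)
    (by simpa using h5)
  have ha : a ∈ alternatingGroup _ := hab ▸ subset_closure (Set.mem_insert _ _)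
  have hb : b ∈ alternatingGroup _ := hab ▸ subset_closure (Set.mem_insert_of_mem _ rfl)
  refine (Group.rank_le (S := {⟨a, ha⟩, ⟨b, hb⟩}) ?_).trans card_le_two
  rw [← map_subtype_inj, MonoidHom.map_closure, ← MonoidHom.range_eq_map, range_subtype]
  simpa [Set.image_pair] using hab

theorem stmt_19 (A : Type*) [CommGroup A] [Finite A] (n : ℕ) (hn : 5 ≤ n) :
    ngen (A × alternatingGroup (Fin n)) = max (ngen A) 2 := by
  have h5 : 5 ≤ Nat.card (Fin n) := by simpa using hn
  rw [ngen_eq_rank, ngen_eq_rank, ← alternatingGroup.rank_eq_two h5]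
  refine le_antisymm (Group.rank_prod_le_max (commutator_alternatingGroup_eq_top h5))
    (max_le ?_ ?_)
  · exact Group.rank_le_of_surjective (MonoidHom.fst _ _) Prod.fst_surjective
  · exact Group.rank_le_of_surjective (MonoidHom.snd _ _) Prod.snd_surjective
end
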